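/- With the same setup (rank 2 case, image of evaluation map spanned by (1,0,a), (0,1,b)), if a + b ≠ 1 and ab ≠ 0, then a₀ = q^{m-2} − 1, a₁ = 0, a₂ = 6q^{m-2}(q−1), a₃ = q^{m-2}(q−1)(4q−8), a₄ = (q−1)(q^m − 3q^{m-1} + 3q^{m-2} − 1). -/

import Mathlib

set_option linter.unusedSectionVars false
open Finset


lemma exists_dual_pair {F V : Type*} [Field F] [AddCommGroup V] [Module F V]
    {u₁ u₂ : V} (h : LinearIndependent F ![u₁, u₂]) (x y : F) :
    ∃ l : V →ₗ[F] F, l u₁ = x ∧ l u₂ = y := by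
  classical
  have hne : u₁ ≠ u₂ := by
    intro e
    have := (LinearIndependent.pair_iff.mp h) 1 (-1) (by simp [e])
    simpa using this.1
  have hs : LinearIndepOn F id ({u₁, u₂} : Set V) := by
    have := (linearIndepOn_id_range_iff h.injective).mpr h
    have hr : Set.range ![u₁, u₂] = ({u₁, u₂} : Set V) := by
      ext v; simp [Matrix.range_cons]; tauto
    rwa [hr] at this
  set B := Module.Basis.extend hs with hB
  have h1 : u₁ ∈ hs.extend (Set.subset_univ _) := hs.subset_extend _ (by simp)
  have h2 : u₂ ∈ hs.extend (Set.subset_univ _) := hs.subset_extend _ (by simp)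
  refine ⟨B.constr F (fun i => if (i : V) = u₁ then x else if (i : V) = u₂ then y else 0), ?_, ?_⟩
  · have key := B.constr_basis F (fun i => if (i : V) = u₁ then x else if (i : V) = u₂ then y else 0) ⟨u₁, h1⟩
    simp only [hB, Module.Basis.coe_extend] at key
    simpa using key
  · have key := B.constr_basis F (fun i => if (i : V) = u₁ then x else if (i : V) = u₂ then y else 0) ⟨u₂, h2⟩
    simp only [hB, Module.Basis.coe_extend] at key
    simpa [hne.symm] using key

lemma ncard_preimage_addhom {M N : Type*} [AddCommGroup M] [AddCommGroup N] [Finite M]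
    (f : M → N) (hadd : ∀ p q, f (p + q) = f p + f q) (hsurj : Function.Surjective f)
    (S : Set N) :
    (f ⁻¹' S).ncard = (f ⁻¹' {0}).ncard * S.ncard := by
  classical
  let φ : M →+ N := AddMonoidHom.mk' f hadd
  have hφ : ∀ p, φ p = f p := fun _ => rfl
  let sec := Function.surjInv hsurj
  have hsec : ∀ v, f (sec v) = v := fun v => Function.surjInv_eq hsurj v
  have e : (f ⁻¹' S) ≃ (f ⁻¹' {0}) × S :=
  { toFun := fun p => (⟨p.1 - sec (f p.1), by
      have : f (p.1 - sec (f p.1)) = f p.1 - f (sec (f p.1)) := by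
        rw [← hφ, ← hφ, ← hφ, map_sub]
      simp [Set.mem_preimage, this, hsec]⟩, ⟨f p.1, p.2⟩)
    invFun := fun q => ⟨sec q.2.1 + q.1.1, by
      have h0 : f q.1.1 = 0 := q.1.2
      have : f (sec q.2.1 + q.1.1) = q.2.1 := by rw [hadd, hsec, h0, add_zero]
      simp only [Set.mem_preimage, this]
      exact q.2.2⟩
    left_inv := fun p => by
      apply Subtype.ext
      simp
    right_inv := fun q => by
      have h0 : f q.1.1 = 0 := q.1.2
      have hfv : f (sec q.2.1 + q.1.1) = q.2.1 := by rw [hadd, hsec, h0, add_zero]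
      ext <;> simp [hfv]
  }
  rw [← Nat.card_coe_set_eq, ← Nat.card_coe_set_eq (f ⁻¹' {0}), ← Nat.card_coe_set_eq S,
    Nat.card_congr e, Nat.card_prod]

lemma ncard_sep_four {α : Type*} (w x y z : α) (p : α → Prop) [DecidablePred p]
    (hwx : w ≠ x) (hwy : w ≠ y) (hwz : w ≠ z) (hxy : x ≠ y) (hxz : x ≠ z) (hyz : y ≠ z) :
    {v ∈ ({w, x, y, z} : Set α) | p v}.ncard
      = (if p w then 1 else 0) + (if p x then 1 else 0) + (if p y then 1 else 0)
        + (if p z then 1 else 0) := by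
  classical
  have hset : {v ∈ ({w, x, y, z} : Set α) | p v} = ↑(({w, x, y, z} : Finset α).filter p) := by
    ext v; simp
  rw [hset, Set.ncard_coe_finset, Finset.card_filter]
  rw [show ({w, x, y, z} : Finset α) = insert w (insert x (insert y ({z} : Finset α))) from rfl]
  rw [Finset.sum_insert (by simp [hwx, hwy, hwz]), Finset.sum_insert (by simp [hxy, hxz]),
    Finset.sum_insert (by simp [hyz]), Finset.sum_singleton]
  ring

variable {F : Type*} [Field F] [Fintype F] [DecidableEq F]

lemma card_ne_zero_filter : ((univ : Finset F).filter (fun t => t ≠ 0)).card = Fintype.card F - 1 := by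
  rw [Finset.filter_ne']
  rw [Finset.card_erase_of_mem (Finset.mem_univ _), Finset.card_univ]

lemma card_ne_two (u v : F) (huv : u ≠ v) :
    ((univ : Finset F).filter (fun t => t ≠ u ∧ t ≠ v)).card = Fintype.card F - 2 := by
  have hset : ((univ : Finset F).filter (fun t => t ≠ u ∧ t ≠ v)) = univ \ {u, v} := by
    ext t; simp
  rw [hset, Finset.card_sdiff_of_subset (Finset.subset_univ _), Finset.card_pair huv, Finset.card_univ]

lemma cardR (α β : F) (hne : α ≠ β) :
    ((univ : Finset (F × F)).filter (fun p => p.1 ≠ 0 ∧ p.2 ≠ α * p.1 ∧ p.2 ≠ β * p.1)).card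
      = (Fintype.card F - 1) * (Fintype.card F - 2) := by
  rw [Finset.card_eq_sum_card_fiberwise (f := Prod.fst) (t := univ.filter (fun c : F => c ≠ 0))
    (fun p hp => by simp only [mem_coe, mem_filter, mem_univ, true_and] at hp ⊢; exact hp.1)]
  have step : ∀ c ∈ univ.filter (fun c : F => c ≠ 0),
      (((univ : Finset (F × F)).filter (fun p => p.1 ≠ 0 ∧ p.2 ≠ α * p.1 ∧ p.2 ≠ β * p.1)).filter
        (fun p => p.1 = c)).card = Fintype.card F - 2 := by
    intro c hc
    simp only [mem_filter, mem_univ, true_and] at hc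
    have himg : (((univ : Finset (F × F)).filter (fun p => p.1 ≠ 0 ∧ p.2 ≠ α * p.1 ∧ p.2 ≠ β * p.1)).filter
        (fun p => p.1 = c))
        = (univ.filter (fun t : F => t ≠ α * c ∧ t ≠ β * c)).image (fun t => (c, t)) := by
      ext ⟨s, t⟩
      simp only [mem_filter, mem_univ, true_and, mem_image, Prod.mk.injEq]
      constructor
      · rintro ⟨⟨h1, h2, h3⟩, rfl⟩; exact ⟨t, ⟨h2, h3⟩, rfl, rfl⟩
      · rintro ⟨t', ⟨h2, h3⟩, rfl, rfl⟩; exact ⟨⟨hc, h2, h3⟩, rfl⟩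
    rw [himg, Finset.card_image_of_injective _ (fun x y hxy => (Prod.ext_iff.mp hxy).2),
      card_ne_two _ _ (fun hh => hne (mul_right_cancel₀ hc hh))]
  rw [Finset.sum_congr rfl step, Finset.sum_const, card_ne_zero_filter, smul_eq_mul]

variable {F : Type*} [Field F] [Fintype F] [DecidableEq F]

def cnt (a b : F) (v : F × F × F) : ℕ :=
  (if v.2.2 ≠ 0 then 1 else 0) + (if v.1 + v.2.2 ≠ 0 then 1 else 0) +
  (if v.2.1 + v.2.2 ≠ 0 then 1 else 0) + (if a * v.1 + b * v.2.1 + v.2.2 ≠ 0 then 1 else 0)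

lemma cnt_le_four (a b : F) (v : F × F × F) : cnt a b v ≤ 4 := by
  unfold cnt; split_ifs <;> omega

lemma cnt_eq_zero_iff (a b : F) (v : F × F × F) :
    cnt a b v = 0 ↔ (v.2.2 = 0 ∧ v.1 + v.2.2 = 0 ∧ v.2.1 + v.2.2 = 0
      ∧ a * v.1 + b * v.2.1 + v.2.2 = 0) := by
  unfold cnt; split_ifs <;> simp_all

lemma cnt_eq_one_iff (a b : F) (v : F × F × F) :
    cnt a b v = 1 ↔
      ((v.2.2 = 0 ∧ v.1 + v.2.2 = 0 ∧ v.2.1 + v.2.2 = 0 ∧ a * v.1 + b * v.2.1 + v.2.2 ≠ 0) ∨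
       (v.2.2 = 0 ∧ v.1 + v.2.2 = 0 ∧ v.2.1 + v.2.2 ≠ 0 ∧ a * v.1 + b * v.2.1 + v.2.2 = 0) ∨
       (v.2.2 = 0 ∧ v.1 + v.2.2 ≠ 0 ∧ v.2.1 + v.2.2 = 0 ∧ a * v.1 + b * v.2.1 + v.2.2 = 0) ∨
       (v.2.2 ≠ 0 ∧ v.1 + v.2.2 = 0 ∧ v.2.1 + v.2.2 = 0 ∧ a * v.1 + b * v.2.1 + v.2.2 = 0)) := by
  unfold cnt; split_ifs <;> simp_all

lemma cnt_eq_two_iff (a b : F) (v : F × F × F) :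
    cnt a b v = 2 ↔
      ((v.2.2 = 0 ∧ v.1 + v.2.2 = 0 ∧ v.2.1 + v.2.2 ≠ 0 ∧ a * v.1 + b * v.2.1 + v.2.2 ≠ 0) ∨
       (v.2.2 = 0 ∧ v.1 + v.2.2 ≠ 0 ∧ v.2.1 + v.2.2 = 0 ∧ a * v.1 + b * v.2.1 + v.2.2 ≠ 0) ∨
       (v.2.2 = 0 ∧ v.1 + v.2.2 ≠ 0 ∧ v.2.1 + v.2.2 ≠ 0 ∧ a * v.1 + b * v.2.1 + v.2.2 = 0) ∨
       (v.2.2 ≠ 0 ∧ v.1 + v.2.2 = 0 ∧ v.2.1 + v.2.2 = 0 ∧ a * v.1 + b * v.2.1 + v.2.2 ≠ 0) ∨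
       (v.2.2 ≠ 0 ∧ v.1 + v.2.2 = 0 ∧ v.2.1 + v.2.2 ≠ 0 ∧ a * v.1 + b * v.2.1 + v.2.2 = 0) ∨
       (v.2.2 ≠ 0 ∧ v.1 + v.2.2 ≠ 0 ∧ v.2.1 + v.2.2 = 0 ∧ a * v.1 + b * v.2.1 + v.2.2 = 0)) := by
  unfold cnt; split_ifs <;> simp_all

lemma cnt_eq_three_iff (a b : F) (v : F × F × F) :
    cnt a b v = 3 ↔
      ((v.2.2 = 0 ∧ v.1 + v.2.2 ≠ 0 ∧ v.2.1 + v.2.2 ≠ 0 ∧ a * v.1 + b * v.2.1 + v.2.2 ≠ 0) ∨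
       (v.2.2 ≠ 0 ∧ v.1 + v.2.2 = 0 ∧ v.2.1 + v.2.2 ≠ 0 ∧ a * v.1 + b * v.2.1 + v.2.2 ≠ 0) ∨
       (v.2.2 ≠ 0 ∧ v.1 + v.2.2 ≠ 0 ∧ v.2.1 + v.2.2 = 0 ∧ a * v.1 + b * v.2.1 + v.2.2 ≠ 0) ∨
       (v.2.2 ≠ 0 ∧ v.1 + v.2.2 ≠ 0 ∧ v.2.1 + v.2.2 ≠ 0 ∧ a * v.1 + b * v.2.1 + v.2.2 = 0)) := by
  unfold cnt; split_ifs <;> simp_all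


lemma card_filter_or {γ : Type*} [DecidableEq γ] (s : Finset γ) (p q : γ → Prop)
    [DecidablePred p] [DecidablePred q] (h : ∀ v, ¬(p v ∧ q v)) :
    (s.filter (fun v => p v ∨ q v)).card = (s.filter p).card + (s.filter q).card := by
  rw [Finset.filter_or, Finset.card_union_of_disjoint]
  rw [Finset.disjoint_left]
  intro v hv hv'
  simp only [mem_filter] at hv hv'
  exact h v ⟨hv.2, hv'.2⟩

-- piece count: image over {t ≠ 0}
lemma card_piece_line (f : F → F × F × F) (hf : Function.Injective f)
    (P : F × F × F → Prop) [DecidablePred P]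
    (hiff : ∀ v : F × F × F, P v ↔ ∃ t, t ≠ 0 ∧ f t = v) :
    ((univ : Finset (F × F × F)).filter P).card = Fintype.card F - 1 := by
  have himg : (univ : Finset (F × F × F)).filter P
      = (univ.filter (fun t : F => t ≠ 0)).image f := by
    ext v
    simp only [mem_filter, mem_univ, true_and, mem_image, hiff]
  rw [himg, Finset.card_image_of_injective _ hf, card_ne_zero_filter]

lemma card_piece_plane (α β : F) (hne : α ≠ β) (f : F × F → F × F × F)
    (hf : Function.Injective f) (P : F × F × F → Prop) [DecidablePred P]
    (hiff : ∀ v : F × F × F, P v ↔ ∃ p : F × F, (p.1 ≠ 0 ∧ p.2 ≠ α * p.1 ∧ p.2 ≠ β * p.1) ∧ f p = v) :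
    ((univ : Finset (F × F × F)).filter P).card = (Fintype.card F - 1) * (Fintype.card F - 2) := by
  have himg : (univ : Finset (F × F × F)).filter P
      = ((univ : Finset (F × F)).filter (fun p => p.1 ≠ 0 ∧ p.2 ≠ α * p.1 ∧ p.2 ≠ β * p.1)).image f := by
    ext v
    simp only [mem_filter, mem_univ, true_and, mem_image, hiff]
  rw [himg, Finset.card_image_of_injective _ hf, cardR α β hne]

variable {F : Type*} [Field F] [Fintype F] [DecidableEq F]

lemma N0card (a b : F) :
    ((univ : Finset (F × F × F)).filter (fun v => cnt a b v = 0)).card = 1 := by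
  have hset : (univ : Finset (F × F × F)).filter (fun v => cnt a b v = 0)
      = {((0 : F), (0 : F), (0 : F))} := by
    ext ⟨s, t, c⟩
    simp only [mem_filter, mem_univ, true_and, mem_singleton, cnt_eq_zero_iff, Prod.mk.injEq]
    constructor
    · rintro ⟨h1, h2, h3, h4⟩
      rw [h1, add_zero] at h2 h3
      exact ⟨h2, h3, h1⟩
    · rintro ⟨rfl, rfl, rfl⟩
      norm_num
  rw [hset, Finset.card_singleton]

lemma N1card (a b : F) (ha : a ≠ 0) (hb : b ≠ 0) (hab1 : a + b ≠ 1) :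
    ((univ : Finset (F × F × F)).filter (fun v => cnt a b v = 1)).card = 0 := by
  rw [Finset.card_eq_zero, Finset.filter_eq_empty_iff]
  rintro ⟨s, t, c⟩ -
  rw [cnt_eq_one_iff]
  rintro (⟨h1, h2, h3, h4⟩ | ⟨h1, h2, h3, h4⟩ | ⟨h1, h2, h3, h4⟩ | ⟨h1, h2, h3, h4⟩)
  · rw [h1, add_zero] at h2 h3
    exact h4 (by rw [h1, h2, h3]; ring)
  · rw [h1, add_zero] at h2 h3
    rw [h1, h2] at h4
    have ht : t = 0 := by
      have : b * t = 0 := by linear_combination h4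
      exact (mul_eq_zero.mp this).resolve_left hb
    exact h3 ht
  · rw [h1, add_zero] at h2 h3
    rw [h1, h3] at h4
    have hs : s = 0 := by
      have : a * s = 0 := by linear_combination h4
      exact (mul_eq_zero.mp this).resolve_left ha
    exact h2 hs
  · have hs : s = -c := by linear_combination h2
    have ht : t = -c := by linear_combination h3
    rw [hs, ht] at h4
    have : (1 - (a + b)) * c = 0 := by linear_combination h4
    rcases mul_eq_zero.mp this with hh | hh
    · exact hab1 (by linear_combination -hh)
    · exact h1 hh

lemma cardC01 (a b : F) (hb : b ≠ 0) :
    ((univ : Finset (F × F × F)).filter (fun v =>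
      v.2.2 = 0 ∧ v.1 + v.2.2 = 0 ∧ v.2.1 + v.2.2 ≠ 0 ∧ a * v.1 + b * v.2.1 + v.2.2 ≠ 0)).card
      = Fintype.card F - 1 := by
  apply card_piece_line (f := fun t : F => ((0 : F), t, (0 : F)))
    (fun x y hxy => congrArg (fun v : F × F × F => v.2.1) hxy)
  rintro ⟨s, t, c⟩
  constructor
  · rintro ⟨h1, h2, h3, h4⟩
    rw [h1, add_zero] at h2 h3
    exact ⟨t, h3, by rw [show s = 0 from h2, show c = 0 from h1]⟩
  · rintro ⟨t', ht', heq⟩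
    obtain ⟨rfl, rfl, rfl⟩ : (0 : F) = s ∧ t' = t ∧ (0 : F) = c := by
      simpa [Prod.ext_iff] using heq
    refine ⟨rfl, by ring, by simpa using ht', by simpa using mul_ne_zero hb ht'⟩

lemma cardC02 (a b : F) (ha : a ≠ 0) :
    ((univ : Finset (F × F × F)).filter (fun v =>
      v.2.2 = 0 ∧ v.1 + v.2.2 ≠ 0 ∧ v.2.1 + v.2.2 = 0 ∧ a * v.1 + b * v.2.1 + v.2.2 ≠ 0)).card
      = Fintype.card F - 1 := by
  apply card_piece_line (f := fun s : F => (s, (0 : F), (0 : F)))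
    (fun x y hxy => congrArg (fun v : F × F × F => v.1) hxy)
  rintro ⟨s, t, c⟩
  constructor
  · rintro ⟨h1, h2, h3, h4⟩
    rw [h1, add_zero] at h2 h3
    exact ⟨s, h2, by rw [show t = 0 from h3, show c = 0 from h1]⟩
  · rintro ⟨s', hs', heq⟩
    obtain ⟨rfl, rfl, rfl⟩ : s' = s ∧ (0 : F) = t ∧ (0 : F) = c := by
      simpa [Prod.ext_iff] using heq
    refine ⟨rfl, by simpa using hs', by ring, by simpa using mul_ne_zero ha hs'⟩

lemma cardC03 (a b : F) (ha : a ≠ 0) (hb : b ≠ 0) :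
    ((univ : Finset (F × F × F)).filter (fun v =>
      v.2.2 = 0 ∧ v.1 + v.2.2 ≠ 0 ∧ v.2.1 + v.2.2 ≠ 0 ∧ a * v.1 + b * v.2.1 + v.2.2 = 0)).card
      = Fintype.card F - 1 := by
  apply card_piece_line (f := fun s : F => (s, -(a * b⁻¹) * s, (0 : F)))
    (fun x y hxy => congrArg (fun v : F × F × F => v.1) hxy)
  rintro ⟨s, t, c⟩
  constructor
  · rintro ⟨h1, h2, h3, h4⟩
    rw [h1, add_zero] at h2 h3
    rw [h1, add_zero] at h4
    refine ⟨s, h2, ?_⟩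
    have ht : -(a * b⁻¹) * s = t := by
      field_simp
      linear_combination -h4
    rw [ht, show c = 0 from h1]
  · rintro ⟨s', hs', heq⟩
    obtain ⟨rfl, rfl, rfl⟩ : s' = s ∧ -(a * b⁻¹) * s' = t ∧ (0 : F) = c := by
      simpa [Prod.ext_iff] using heq
    refine ⟨rfl, by simpa using hs', ?_, ?_⟩
    · simpa using mul_ne_zero (neg_ne_zero.mpr (mul_ne_zero ha (inv_ne_zero hb))) hs'
    · field_simp
      ring

lemma cardC12 (a b : F) (hab1 : a + b ≠ 1) :
    ((univ : Finset (F × F × F)).filter (fun v =>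
      v.2.2 ≠ 0 ∧ v.1 + v.2.2 = 0 ∧ v.2.1 + v.2.2 = 0 ∧ a * v.1 + b * v.2.1 + v.2.2 ≠ 0)).card
      = Fintype.card F - 1 := by
  apply card_piece_line (f := fun c : F => (-c, -c, c))
    (fun x y hxy => congrArg (fun v : F × F × F => v.2.2) hxy)
  rintro ⟨s, t, c⟩
  constructor
  · rintro ⟨h1, h2, h3, h4⟩
    exact ⟨c, h1, by rw [show s = -c by linear_combination h2, show t = -c by linear_combination h3]⟩
  · rintro ⟨c', hc', heq⟩
    obtain ⟨rfl, rfl, rfl⟩ : -c' = s ∧ -c' = t ∧ c' = c := by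
      simpa [Prod.ext_iff] using heq
    refine ⟨hc', by ring, by ring, ?_⟩
    have hval : a * -c' + b * -c' + c' = (1 - (a + b)) * c' := by ring
    rw [hval]
    exact mul_ne_zero (sub_ne_zero.mpr (Ne.symm hab1)) hc'

lemma cardC13 (a b : F) (hb : b ≠ 0) (hab1 : a + b ≠ 1) :
    ((univ : Finset (F × F × F)).filter (fun v =>
      v.2.2 ≠ 0 ∧ v.1 + v.2.2 = 0 ∧ v.2.1 + v.2.2 ≠ 0 ∧ a * v.1 + b * v.2.1 + v.2.2 = 0)).card
      = Fintype.card F - 1 := by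
  apply card_piece_line (f := fun c : F => (-c, (a - 1) * b⁻¹ * c, c))
    (fun x y hxy => congrArg (fun v : F × F × F => v.2.2) hxy)
  rintro ⟨s, t, c⟩
  constructor
  · rintro ⟨h1, h2, h3, h4⟩
    have hs : s = -c := by linear_combination h2
    have ht : (a - 1) * b⁻¹ * c = t := by
      field_simp
      linear_combination a * h2 - h4
    exact ⟨c, h1, by rw [hs, ht]⟩
  · rintro ⟨c', hc', heq⟩
    obtain ⟨rfl, rfl, rfl⟩ : -c' = s ∧ (a - 1) * b⁻¹ * c' = t ∧ c' = c := by
      simpa [Prod.ext_iff] using heq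
    have hab1' : a - 1 + b ≠ 0 := fun hh => hab1 (by linear_combination hh)
    refine ⟨hc', by ring, ?_, ?_⟩
    · have hval : (a - 1) * b⁻¹ * c' + c' = (a - 1 + b) * b⁻¹ * c' := by
        field_simp
      rw [hval]
      exact mul_ne_zero (mul_ne_zero hab1' (inv_ne_zero hb)) hc'
    · field_simp
      ring

lemma cardC23 (a b : F) (ha : a ≠ 0) (hab1 : a + b ≠ 1) :
    ((univ : Finset (F × F × F)).filter (fun v =>
      v.2.2 ≠ 0 ∧ v.1 + v.2.2 ≠ 0 ∧ v.2.1 + v.2.2 = 0 ∧ a * v.1 + b * v.2.1 + v.2.2 = 0)).card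
      = Fintype.card F - 1 := by
  apply card_piece_line (f := fun c : F => ((b - 1) * a⁻¹ * c, -c, c))
    (fun x y hxy => congrArg (fun v : F × F × F => v.2.2) hxy)
  rintro ⟨s, t, c⟩
  constructor
  · rintro ⟨h1, h2, h3, h4⟩
    have ht : t = -c := by linear_combination h3
    have hs : (b - 1) * a⁻¹ * c = s := by
      field_simp
      linear_combination b * h3 - h4
    exact ⟨c, h1, by rw [hs, ht]⟩
  · rintro ⟨c', hc', heq⟩
    obtain ⟨rfl, rfl, rfl⟩ : (b - 1) * a⁻¹ * c' = s ∧ -c' = t ∧ c' = c := by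
      simpa [Prod.ext_iff] using heq
    have hab1' : b - 1 + a ≠ 0 := fun hh => hab1 (by linear_combination hh)
    refine ⟨hc', ?_, by ring, ?_⟩
    · have hval : (b - 1) * a⁻¹ * c' + c' = (b - 1 + a) * a⁻¹ * c' := by
        field_simp
      rw [hval]
      exact mul_ne_zero (mul_ne_zero hab1' (inv_ne_zero ha)) hc'
    · field_simp
      ring

lemma N2card (a b : F) (ha : a ≠ 0) (hb : b ≠ 0) (hab1 : a + b ≠ 1) :
    ((univ : Finset (F × F × F)).filter (fun v => cnt a b v = 2)).card
      = 6 * (Fintype.card F - 1) := by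
  rw [Finset.filter_congr (fun v _ => cnt_eq_two_iff a b v)]
  rw [card_filter_or _ _ _ (by tauto), card_filter_or _ _ _ (by tauto),
    card_filter_or _ _ _ (by tauto), card_filter_or _ _ _ (by tauto),
    card_filter_or _ _ _ (by tauto)]
  rw [cardC01 a b hb, cardC02 a b ha, cardC03 a b ha hb, cardC12 a b hab1,
    cardC13 a b hb hab1, cardC23 a b ha hab1]
  ring

lemma cardQ0 (a b : F) (ha : a ≠ 0) (hb : b ≠ 0) :
    ((univ : Finset (F × F × F)).filter (fun v =>
      v.2.2 = 0 ∧ v.1 + v.2.2 ≠ 0 ∧ v.2.1 + v.2.2 ≠ 0 ∧ a * v.1 + b * v.2.1 + v.2.2 ≠ 0)).card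
      = (Fintype.card F - 1) * (Fintype.card F - 2) := by
  apply card_piece_plane (α := (0 : F)) (β := -(a * b⁻¹))
    (Ne.symm (neg_ne_zero.mpr (mul_ne_zero ha (inv_ne_zero hb))))
    (f := fun p : F × F => (p.1, p.2, (0 : F)))
    (fun x y hxy => Prod.ext_iff.mpr
      ⟨congrArg (fun v : F × F × F => v.1) hxy, congrArg (fun v : F × F × F => v.2.1) hxy⟩)
  rintro ⟨s, t, c⟩
  dsimp only
  constructor
  · rintro ⟨h1, h2, h3, h4⟩
    rw [h1, add_zero] at h2 h3 h4
    refine ⟨(s, t), ⟨h2, by simpa using h3, ?_⟩, by rw [show c = 0 from h1]⟩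
    intro hh
    dsimp only at hh
    apply h4
    rw [hh]
    field_simp
    ring
  · rintro ⟨⟨s', t'⟩, ⟨hp1, hp2, hp3⟩, heq⟩
    obtain ⟨rfl, rfl, rfl⟩ : s' = s ∧ t' = t ∧ (0 : F) = c := by
      simpa [Prod.ext_iff] using heq
    refine ⟨rfl, by simpa using hp1, by simpa using hp2, ?_⟩
    intro hh
    apply hp3
    field_simp
    linear_combination hh

lemma cardQ1 (a b : F) (hb : b ≠ 0) (hab1 : a + b ≠ 1) :
    ((univ : Finset (F × F × F)).filter (fun v =>
      v.2.2 ≠ 0 ∧ v.1 + v.2.2 = 0 ∧ v.2.1 + v.2.2 ≠ 0 ∧ a * v.1 + b * v.2.1 + v.2.2 ≠ 0)).card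
      = (Fintype.card F - 1) * (Fintype.card F - 2) := by
  have hne : (-1 : F) ≠ (a - 1) * b⁻¹ := by
    intro hh
    apply hab1
    field_simp at hh
    linear_combination -hh
  apply card_piece_plane (α := (-1 : F)) (β := (a - 1) * b⁻¹) hne
    (f := fun p : F × F => (-p.1, p.2, p.1))
    (fun x y hxy => Prod.ext_iff.mpr
      ⟨congrArg (fun v : F × F × F => v.2.2) hxy, congrArg (fun v : F × F × F => v.2.1) hxy⟩)
  rintro ⟨s, t, c⟩
  dsimp only
  constructor
  · rintro ⟨h1, h2, h3, h4⟩
    have hs : s = -c := by linear_combination h2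
    refine ⟨(c, t), ⟨h1, by intro hh; dsimp only at hh; apply h3; rw [hh]; ring, ?_⟩, by rw [hs]⟩
    intro hh
    dsimp only at hh
    apply h4
    rw [hs, hh]
    field_simp
    ring
  · rintro ⟨⟨c', t'⟩, ⟨hp1, hp2, hp3⟩, heq⟩
    obtain ⟨rfl, rfl, rfl⟩ : -c' = s ∧ t' = t ∧ c' = c := by
      simpa [Prod.ext_iff] using heq
    refine ⟨hp1, by ring, by intro hh; apply hp2; linear_combination hh, ?_⟩
    intro hh
    apply hp3
    field_simp
    linear_combination hh

lemma cardQ2 (a b : F) (ha : a ≠ 0) (hab1 : a + b ≠ 1) :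
    ((univ : Finset (F × F × F)).filter (fun v =>
      v.2.2 ≠ 0 ∧ v.1 + v.2.2 ≠ 0 ∧ v.2.1 + v.2.2 = 0 ∧ a * v.1 + b * v.2.1 + v.2.2 ≠ 0)).card
      = (Fintype.card F - 1) * (Fintype.card F - 2) := by
  have hne : (-1 : F) ≠ (b - 1) * a⁻¹ := by
    intro hh
    apply hab1
    field_simp at hh
    linear_combination -hh
  apply card_piece_plane (α := (-1 : F)) (β := (b - 1) * a⁻¹) hne
    (f := fun p : F × F => (p.2, -p.1, p.1))
    (fun x y hxy => Prod.ext_iff.mpr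
      ⟨congrArg (fun v : F × F × F => v.2.2) hxy, congrArg (fun v : F × F × F => v.1) hxy⟩)
  rintro ⟨s, t, c⟩
  dsimp only
  constructor
  · rintro ⟨h1, h2, h3, h4⟩
    have ht : t = -c := by linear_combination h3
    refine ⟨(c, s), ⟨h1, by intro hh; dsimp only at hh; apply h2; rw [hh]; ring, ?_⟩, by rw [ht]⟩
    intro hh
    dsimp only at hh
    apply h4
    rw [ht, hh]
    field_simp
    ring
  · rintro ⟨⟨c', s'⟩, ⟨hp1, hp2, hp3⟩, heq⟩
    obtain ⟨rfl, rfl, rfl⟩ : s' = s ∧ -c' = t ∧ c' = c := by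
      simpa [Prod.ext_iff] using heq
    refine ⟨hp1, by intro hh; apply hp2; linear_combination hh, by ring, ?_⟩
    intro hh
    apply hp3
    field_simp
    linear_combination hh

lemma cardQ3 (a b : F) (ha : a ≠ 0) (hb : b ≠ 0) (hab1 : a + b ≠ 1) :
    ((univ : Finset (F × F × F)).filter (fun v =>
      v.2.2 ≠ 0 ∧ v.1 + v.2.2 ≠ 0 ∧ v.2.1 + v.2.2 ≠ 0 ∧ a * v.1 + b * v.2.1 + v.2.2 = 0)).card
      = (Fintype.card F - 1) * (Fintype.card F - 2) := by
  have hne : (-1 : F) ≠ (b - 1) * a⁻¹ := by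
    intro hh
    apply hab1
    field_simp at hh
    linear_combination -hh
  apply card_piece_plane (α := (-1 : F)) (β := (b - 1) * a⁻¹) hne
    (f := fun p : F × F => (p.2, (-p.1 - a * p.2) * b⁻¹, p.1))
    (fun x y hxy => Prod.ext_iff.mpr
      ⟨congrArg (fun v : F × F × F => v.2.2) hxy, congrArg (fun v : F × F × F => v.1) hxy⟩)
  rintro ⟨s, t, c⟩
  dsimp only
  constructor
  · rintro ⟨h1, h2, h3, h4⟩
    have ht : (-c - a * s) * b⁻¹ = t := by
      field_simp
      linear_combination -h4
    refine ⟨(c, s), ⟨h1, ?_, ?_⟩, by dsimp only; rw [← ht]⟩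
    · intro hh
      dsimp only at hh
      exact h2 (by linear_combination hh)
    · intro hh
      dsimp only at hh
      have hs : a * s = (b - 1) * c := by
        field_simp at hh
        linear_combination hh
      apply h3
      rw [← ht]
      field_simp
      linear_combination -hs
  · rintro ⟨⟨c', s'⟩, ⟨hp1, hp2, hp3⟩, heq⟩
    obtain ⟨rfl, rfl, rfl⟩ : s' = s ∧ (-c' - a * s') * b⁻¹ = t ∧ c' = c := by
      simpa [Prod.ext_iff] using heq
    refine ⟨hp1, by intro hh; apply hp2; linear_combination hh, ?_, by field_simp; ring⟩
    intro hh
    apply hp3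
    field_simp at hh
    field_simp
    linear_combination -hh

lemma N3card (a b : F) (ha : a ≠ 0) (hb : b ≠ 0) (hab1 : a + b ≠ 1) :
    ((univ : Finset (F × F × F)).filter (fun v => cnt a b v = 3)).card
      = 4 * ((Fintype.card F - 1) * (Fintype.card F - 2)) := by
  rw [Finset.filter_congr (fun v _ => cnt_eq_three_iff a b v)]
  rw [card_filter_or _ _ _ (by tauto), card_filter_or _ _ _ (by tauto),
    card_filter_or _ _ _ (by tauto)]
  rw [cardQ0 a b ha hb, cardQ1 a b hb hab1, cardQ2 a b ha hab1, cardQ3 a b ha hb hab1]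
  ring

lemma N4card (a b : F) (ha : a ≠ 0) (hb : b ≠ 0) (hab1 : a + b ≠ 1) :
    ((univ : Finset (F × F × F)).filter (fun v => cnt a b v = 4)).card
      = Fintype.card F ^ 3 -
        (1 + 6 * (Fintype.card F - 1) + 4 * ((Fintype.card F - 1) * (Fintype.card F - 2))) := by
  have hsplit := Finset.card_filter_add_card_filter_not
    (s := (univ : Finset (F × F × F))) (p := fun v => cnt a b v ≤ 3)
  have h4eq : (univ : Finset (F × F × F)).filter (fun v => ¬ cnt a b v ≤ 3)
      = (univ : Finset (F × F × F)).filter (fun v => cnt a b v = 4) := by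
    apply Finset.filter_congr
    intro v _
    have := cnt_le_four a b v
    constructor
    · intro hv; omega
    · intro hv; omega
  have h3eq : ((univ : Finset (F × F × F)).filter (fun v => cnt a b v ≤ 3)).card
      = 1 + 0 + 6 * (Fintype.card F - 1) + 4 * ((Fintype.card F - 1) * (Fintype.card F - 2)) := by
    rw [Finset.filter_congr (fun v _ => show cnt a b v ≤ 3 ↔
      (cnt a b v = 0 ∨ cnt a b v = 1 ∨ cnt a b v = 2 ∨ cnt a b v = 3) by omega)]
    rw [card_filter_or _ _ _ (fun v => by omega), card_filter_or _ _ _ (fun v => by omega),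
      card_filter_or _ _ _ (fun v => by omega)]
    rw [N0card a b, N1card a b ha hb hab1, N2card a b ha hb hab1, N3card a b ha hb hab1]
    omega
  have hcard : (univ : Finset (F × F × F)).card = Fintype.card F ^ 3 := by
    rw [Finset.card_univ, Fintype.card_prod, Fintype.card_prod]
    ring
  rw [h4eq, h3eq, hcard] at hsplit
  omega

def Emap {F : Type*} [Field F] {m : ℕ} (p : ((Fin m → F) →ₗ[F] F) × F) : (Fin m → F) → F :=
  fun x => p.1 x + p.2

def pimap {F : Type*} [Field F] {m : ℕ} (u₁ u₂ : Fin m → F)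
    (p : ((Fin m → F) →ₗ[F] F) × F) : F × F × F :=
  (p.1 u₁, p.1 u₂, p.2)

instance instFinLM {F : Type*} [Field F] [Finite F] {m : ℕ} : Finite ((Fin m → F) →ₗ[F] F) :=
  Finite.of_injective _ (DFunLike.coe_injective (F := (Fin m → F) →ₗ[F] F))

lemma Emap_inj {F : Type*} [Field F] {m : ℕ} :
    Function.Injective (Emap (F := F) (m := m)) := by
  intro p p' hE
  have hb₀ : p.2 = p'.2 := by
    have := congrFun hE 0
    simpa [Emap] using this
  have hl : p.1 = p'.1 := by
    apply LinearMap.ext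
    intro x
    have := congrFun hE x
    simp only [Emap] at this
    rw [hb₀] at this
    exact add_right_cancel this
  exact Prod.ext_iff.mpr ⟨hl, hb₀⟩

/-- Rank-2 case of `T = {0, u₁, u₂, u₃}` with `u₃ = a•u₁ + b•u₂`, second subcase
`a + b ≠ 1` and `ab ≠ 0`: counts of non-constant codewords of `RM_q(1,m)` by number
of nonzero values on `T`. -/
theorem stmt_15 (F : Type) [Field F] [Fintype F] (q m : ℕ) (hq : q = Fintype.card F)
    (hq3 : 3 ≤ q) (hm : 2 ≤ m) (u₁ u₂ u₃ : Fin m → F)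
    (h : LinearIndependent F ![u₁, u₂])
    (a b : F) (hu₃ : u₃ = a • u₁ + b • u₂)
    (hab : a * b ≠ 0) (hab1 : a + b ≠ 1)
    (T : Set (Fin m → F)) (hT : T = {0, u₁, u₂, u₃})
    (NC : Set ((Fin m → F) → F))
    (hNC : NC = {c | ∃ (l : (Fin m → F) →ₗ[F] F), l ≠ 0 ∧ ∃ b₀ : F, c = fun x => l x + b₀}) :
    {c ∈ NC | {x ∈ T | c x ≠ 0}.ncard = 0}.ncard = q ^ (m - 2) - 1 ∧
    {c ∈ NC | {x ∈ T | c x ≠ 0}.ncard = 1}.ncard = 0 ∧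
    {c ∈ NC | {x ∈ T | c x ≠ 0}.ncard = 2}.ncard = 6 * q ^ (m - 2) * (q - 1) ∧
    {c ∈ NC | {x ∈ T | c x ≠ 0}.ncard = 3}.ncard = q ^ (m - 2) * (q - 1) * (4 * q - 8) ∧
    {c ∈ NC | {x ∈ T | c x ≠ 0}.ncard = 4}.ncard
      = (q - 1) * (q ^ m - 3 * q ^ (m - 1) + 3 * q ^ (m - 2) - 1) := by
  classical
  have ha : a ≠ 0 := fun hh => hab (by rw [hh, zero_mul])
  have hb : b ≠ 0 := fun hh => hab (by rw [hh, mul_zero])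
  have hcomb : ∀ s t : F, s • u₁ + t • u₂ = 0 → s = 0 ∧ t = 0 :=
    LinearIndependent.pair_iff.mp h
  -- distinctness of the four points
  have h01 : (0 : Fin m → F) ≠ u₁ := by
    intro e
    have := (hcomb 1 0 (by simp [← e])).1
    simp at this
  have h02 : (0 : Fin m → F) ≠ u₂ := by
    intro e
    have := (hcomb 0 1 (by simp [← e])).2
    simp at this
  have h03 : (0 : Fin m → F) ≠ u₃ := by
    intro e
    exact ha (hcomb a b (by rw [← hu₃, ← e])).1
  have h12 : u₁ ≠ u₂ := by
    intro e
    have := (hcomb 1 (-1) (by simp [e])).1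
    simp at this
  have h13 : u₁ ≠ u₃ := by
    intro e
    have := hcomb (a - 1) b (by
      calc (a - 1) • u₁ + b • u₂ = (a • u₁ + b • u₂) - u₁ := by
            rw [sub_smul, one_smul]; abel
        _ = u₃ - u₁ := by rw [hu₃]
        _ = 0 := by rw [← e, sub_self])
    exact hb this.2
  have h23 : u₂ ≠ u₃ := by
    intro e
    have := hcomb a (b - 1) (by
      calc a • u₁ + (b - 1) • u₂ = (a • u₁ + b • u₂) - u₂ := by
            rw [sub_smul, one_smul]; abel
        _ = u₃ - u₂ := by rw [hu₃]
        _ = 0 := by rw [← e, sub_self])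
    exact ha this.1
  -- key pointwise lemma
  have keyp : ∀ p : ((Fin m → F) →ₗ[F] F) × F,
      {x ∈ T | Emap p x ≠ 0}.ncard = cnt a b (pimap u₁ u₂ p) := by
    intro p
    rw [hT, ncard_sep_four 0 u₁ u₂ u₃ (fun x => Emap p x ≠ 0) h01 h02 h03 h12 h13 h23]
    have e3 : p.1 u₃ = a * p.1 u₁ + b * p.1 u₂ := by
      rw [hu₃]
      simp [map_add, map_smul, smul_eq_mul]
    simp only [cnt, pimap, Emap]
    simp [e3, map_zero]
    by_cases h0 : p.2 = 0 <;> by_cases h1 : p.1 u₁ + p.2 = 0 <;> by_cases h2 : p.1 u₂ + p.2 = 0 <;> by_cases h3 : a * p.1 u₁ + b * p.1 u₂ + p.2 = 0 <;> simp [h0, h1, h2, h3]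
  -- additivity and surjectivity of pimap
  have hadd : ∀ p p' : ((Fin m → F) →ₗ[F] F) × F,
      pimap u₁ u₂ (p + p') = pimap u₁ u₂ p + pimap u₁ u₂ p' := by
    intro p p'
    simp [pimap, Prod.ext_iff]
  have hsurj : Function.Surjective (pimap u₁ u₂ (F := F)) := by
    rintro ⟨x, y, c⟩
    obtain ⟨l, hl1, hl2⟩ := exists_dual_pair h x y
    exact ⟨(l, c), by simp [pimap, hl1, hl2]⟩
  have hq0 : 0 < q := by omega
  -- cardinality of the dual space
  have hD : Nat.card ((Fin m → F) →ₗ[F] F) = q ^ m := by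
    have e := ((Pi.basisFun F (Fin m)).dualBasis).equivFun
    rw [Nat.card_congr e.toEquiv]
    simp [Nat.card_eq_fintype_card, hq]
  -- kernel cardinality
  have hker : ((pimap u₁ u₂ (F := F)) ⁻¹' {0}).ncard = q ^ (m - 2) := by
    have huniv := ncard_preimage_addhom (pimap u₁ u₂ (F := F)) hadd hsurj Set.univ
    rw [Set.preimage_univ, Set.ncard_univ, Set.ncard_univ, Nat.card_prod, hD,
      Nat.card_prod, Nat.card_prod, Nat.card_eq_fintype_card, ← hq] at huniv
    have hpow : q ^ m * q = q ^ (m - 2) * (q * (q * q)) := by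
      rw [show q * (q * q) = q ^ 3 by ring, ← pow_add, ← pow_succ]
      congr 1
      omega
    rw [hpow] at huniv
    exact (Nat.eq_of_mul_eq_mul_right (by positivity) huniv.symm)
  -- value of cnt on the axis
  have hcnt0 : ∀ y : F, cnt a b ((0 : F), (0 : F), y) = if y = 0 then 0 else 4 := by
    intro y
    by_cases hy : y = 0 <;> simp [cnt, hy]
  -- the master count
  have count : ∀ i : ℕ,
      {c ∈ NC | {x ∈ T | c x ≠ 0}.ncard = i}.ncard
        = q ^ (m - 2) * ((univ : Finset (F × F × F)).filter (fun v => cnt a b v = i)).card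
          - {y : F | cnt a b ((0 : F), (0 : F), y) = i}.ncard := by
    intro i
    have himg : {c ∈ NC | {x ∈ T | c x ≠ 0}.ncard = i}
        = Emap '' {p : ((Fin m → F) →ₗ[F] F) × F | p.1 ≠ 0 ∧ cnt a b (pimap u₁ u₂ p) = i} := by
      ext c
      simp only [Set.mem_setOf_eq, Set.mem_image, hNC]
      constructor
      · rintro ⟨⟨l, hl, b₀, rfl⟩, hcard⟩
        refine ⟨(l, b₀), ⟨hl, ?_⟩, rfl⟩
        rw [← keyp (l, b₀)]
        exact hcard
      · rintro ⟨p, ⟨hp, hcnt⟩, rfl⟩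
        exact ⟨⟨p.1, hp, p.2, rfl⟩, by rw [keyp p]; exact hcnt⟩
    rw [himg, Set.ncard_image_of_injective _ Emap_inj]
    have hsplitset : {p : ((Fin m → F) →ₗ[F] F) × F | p.1 ≠ 0 ∧ cnt a b (pimap u₁ u₂ p) = i}
        = {p : ((Fin m → F) →ₗ[F] F) × F | cnt a b (pimap u₁ u₂ p) = i}
          \ {p : ((Fin m → F) →ₗ[F] F) × F | cnt a b (pimap u₁ u₂ p) = i ∧ p.1 = 0} := by
      ext p
      simp only [Set.mem_setOf_eq, Set.mem_diff]
      tauto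
    rw [hsplitset, Set.ncard_diff (fun p hp => hp.1) (Set.toFinite _)]
    congr 1
    · have hpre : {p : ((Fin m → F) →ₗ[F] F) × F | cnt a b (pimap u₁ u₂ p) = i}
          = (pimap u₁ u₂) ⁻¹' {v : F × F × F | cnt a b v = i} := rfl
      rw [hpre, ncard_preimage_addhom _ hadd hsurj, hker]
      congr 1
      have hS : {v : F × F × F | cnt a b v = i}
          = ↑((univ : Finset (F × F × F)).filter (fun v => cnt a b v = i)) := by
        ext v; simp
      rw [hS, Set.ncard_coe_finset]
    · have hC : {p : ((Fin m → F) →ₗ[F] F) × F | cnt a b (pimap u₁ u₂ p) = i ∧ p.1 = 0}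
          = (fun y : F => ((0 : (Fin m → F) →ₗ[F] F), y)) ''
            {y : F | cnt a b ((0 : F), (0 : F), y) = i} := by
        ext ⟨l, y⟩
        simp only [Set.mem_setOf_eq, Set.mem_image]
        constructor
        · rintro ⟨hcnt, hl⟩
          refine ⟨y, ?_, by rw [hl]⟩
          have : pimap u₁ u₂ (l, y) = ((0 : F), (0 : F), y) := by
            simp [pimap, hl]
          rwa [this] at hcnt
        · rintro ⟨y', hy', heq⟩
          obtain ⟨rfl, rfl⟩ : (0 : (Fin m → F) →ₗ[F] F) = l ∧ y' = y := by
            simpa [Prod.ext_iff] using heq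
          refine ⟨?_, rfl⟩
          have : pimap u₁ u₂ ((0 : (Fin m → F) →ₗ[F] F), y') = ((0 : F), (0 : F), y') := by
            simp [pimap]
          rwa [this]
      rw [hC, Set.ncard_image_of_injective _ (fun x y hxy => (Prod.ext_iff.mp hxy).2)]
  -- the axis sets
  have hM0 : {y : F | cnt a b ((0 : F), (0 : F), y) = 0}.ncard = 1 := by
    have : {y : F | cnt a b ((0 : F), (0 : F), y) = 0} = {(0 : F)} := by
      ext y
      rw [Set.mem_setOf_eq, hcnt0 y]
      by_cases hy : y = 0 <;> simp [hy]
    rw [this, Set.ncard_singleton]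
  have hMmid : ∀ i, i = 1 ∨ i = 2 ∨ i = 3 →
      {y : F | cnt a b ((0 : F), (0 : F), y) = i}.ncard = 0 := by
    intro i hi
    have : {y : F | cnt a b ((0 : F), (0 : F), y) = i} = ∅ := by
      ext y
      rw [Set.mem_setOf_eq, hcnt0 y]
      by_cases hy : y = 0 <;> simp [hy] <;> omega
    rw [this, Set.ncard_empty]
  have hM4 : {y : F | cnt a b ((0 : F), (0 : F), y) = 4}.ncard = q - 1 := by
    have : {y : F | cnt a b ((0 : F), (0 : F), y) = 4}
        = ↑((univ : Finset F).filter (fun y => y ≠ 0)) := by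
      ext y
      rw [Set.mem_setOf_eq, hcnt0 y]
      by_cases hy : y = 0 <;> simp [hy]
    rw [this, Set.ncard_coe_finset, card_ne_zero_filter, hq]
  refine ⟨?_, ?_, ?_, ?_, ?_⟩
  · rw [count 0, N0card a b, hM0, mul_one]
  · rw [count 1, N1card a b ha hb hab1, hMmid 1 (by omega), mul_zero]
    rfl
  · rw [count 2, N2card a b ha hb hab1, hMmid 2 (by omega), ← hq, Nat.sub_zero]
    ring
  · rw [count 3, N3card a b ha hb hab1, hMmid 3 (by omega), ← hq, Nat.sub_zero]
    have h48 : 4 * q - 8 = 4 * (q - 2) := by omega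
    rw [h48]
    ring
  · rw [count 4, N4card a b ha hb hab1, hM4, ← hq]
    obtain ⟨d, rfl⟩ : ∃ d, q = d + 3 := ⟨q - 3, by omega⟩
    set Q := (d + 3) ^ (m - 2) with hQ
    have hqm : (d + 3) ^ m = Q * (d + 3) ^ 2 := by
      rw [hQ, ← pow_add]
      congr 1
      omega
    have hqm1 : (d + 3) ^ (m - 1) = Q * (d + 3) := by
      rw [hQ, ← pow_succ]
      congr 1
      omega
    rw [hqm, hqm1]
    have hin : (d + 3) ^ 3 - (1 + 6 * (d + 3 - 1) + 4 * ((d + 3 - 1) * (d + 3 - 2)))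
        = (d + 2) * (d * d + 3 * d + 3) := by
      rw [show d + 3 - 1 = d + 2 from by omega, show d + 3 - 2 = d + 1 from by omega]
      rw [Nat.sub_eq_iff_eq_add (Nat.le.intro (k := (d + 2) * (d * d + 3 * d + 3)) (by ring))]
      ring
    rw [hin]
    have h5 : Q * (d + 3) ^ 2 - 3 * (Q * (d + 3)) = Q * (d * d + 3 * d) := by
      rw [Nat.sub_eq_iff_eq_add (Nat.le.intro (k := Q * (d * d + 3 * d)) (by ring))]
      ring
    rw [h5]
    rw [show Q * (d * d + 3 * d) + 3 * Q = Q * (d * d + 3 * d + 3) from by ring]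
    have hQ1 : 1 ≤ Q * (d * d + 3 * d + 3) := by
      have : 1 ≤ Q := Nat.one_le_pow _ _ (by omega)
      nlinarith
    obtain ⟨P, hP⟩ : ∃ P, Q * (d * d + 3 * d + 3) = P + 1 := ⟨Q * (d * d + 3 * d + 3) - 1, by omega⟩
    rw [show d + 3 - 1 = d + 2 from by omega, hP]
    rw [show Q * ((d + 2) * (d * d + 3 * d + 3)) = (d + 2) * (Q * (d * d + 3 * d + 3)) from by ring,
      hP]
    rw [show (d + 2) * (P + 1) = (d + 2) * P + (d + 2) from by ring, Nat.add_sub_cancel,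
      Nat.add_sub_cancel]
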